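/- arXiv:cond-mat/0310735 — 2 statements merged into one kernel-verified Lean document; each statement's English description precedes it below -/
import Mathlib

section
/- Let β satisfy 1 < β < 4/3 and let f(x) = tanh(βx) − x. Let x₀ : ℝ → ℝ be a continuous 1-periodic function and let v : ℝ → ℝ be a differentiable 1-periodic function, not identically zero, satisfying v'(t) = f'(x₀(t))·v(t) for all t. Then ∫₀¹ f'''(x₀(s))·v(s)² ds < 0. -/
/-!
Write `w = f'(x₀)`, so that `v' = w v`. Since `f' = β(1 - ζ²) - 1`, the third derivative
`f''' = -2β³(1 - ζ²)(1 - 3ζ²)` is the quadratic polynomial `-2β(1 + w)(3 - 2β + 3w)` in `w`.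
Multiplying by `v²` turns `w v` into `v'`, so the integrand is
`-6β v'² - 2β(6 - 2β) v' v - 2β(3 - 2β) v²`. The cross term `v' v = (v²/2)'` integrates to zero
over a period, and for `0 < β < 3/2` the two remaining terms are `≤ 0` and `< 0`.
-/

open Real Function

theorem Real.hasDerivAt_tanh (x : ℝ) : HasDerivAt tanh (1 - tanh x ^ 2) x := by
  rw [show tanh = fun y => sinh y / cosh y from funext tanh_eq_sinh_div_cosh]
  refine ((hasDerivAt_sinh x).div (hasDerivAt_cosh x) (cosh_pos x).ne').congr_deriv ?_
  field_simp

section TanhMulSub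

variable (β : ℝ)

theorem hasDerivAt_tanh_mul (x : ℝ) :
    HasDerivAt (fun y => tanh (β * y)) (β * (1 - tanh (β * x) ^ 2)) x :=
  ((hasDerivAt_tanh (β * x)).comp x ((hasDerivAt_id x).const_mul β)).congr_deriv (by ring)

theorem deriv_tanh_mul_sub_id :
    deriv (fun x => tanh (β * x) - x) = fun x => β * (1 - tanh (β * x) ^ 2) - 1 :=
  funext fun x => ((hasDerivAt_tanh_mul β x).sub (hasDerivAt_id x)).deriv

theorem hasDerivAt_deriv_tanh_mul_sub_id (x : ℝ) :
    HasDerivAt (deriv fun x => tanh (β * x) - x)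
      (-2 * β ^ 2 * tanh (β * x) * (1 - tanh (β * x) ^ 2)) x := by
  rw [deriv_tanh_mul_sub_id]
  exact ((((hasDerivAt_tanh_mul β x).pow 2).const_sub 1).const_mul β |>.sub_const 1).congr_deriv
    (by simp only [Nat.cast_ofNat]; ring)

theorem continuous_deriv_tanh_mul_sub_id : Continuous (deriv fun x => tanh (β * x) - x) :=
  continuous_iff_continuousAt.2 fun x => (hasDerivAt_deriv_tanh_mul_sub_id β x).continuousAt

theorem iteratedDeriv_three_tanh_mul_sub_id (x : ℝ) :
    iteratedDeriv 3 (fun x => tanh (β * x) - x) x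
      = -2 * β ^ 3 * (1 - tanh (β * x) ^ 2) * (1 - 3 * tanh (β * x) ^ 2) := by
  have hderiv2 : deriv (deriv fun x => tanh (β * x) - x)
      = fun x => -2 * β ^ 2 * tanh (β * x) * (1 - tanh (β * x) ^ 2) :=
    funext fun x => (hasDerivAt_deriv_tanh_mul_sub_id β x).deriv
  rw [iteratedDeriv_succ, iteratedDeriv_succ, iteratedDeriv_one, hderiv2]
  have hζ := hasDerivAt_tanh_mul β x
  exact ((hζ.const_mul (-2 * β ^ 2)).mul ((hζ.pow 2).const_sub 1)).deriv.trans
    (by simp only [Pi.pow_apply, Nat.cast_ofNat]; ring)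

theorem iteratedDeriv_three_tanh_mul_sub_id_eq_deriv (x : ℝ) :
    iteratedDeriv 3 (fun x => tanh (β * x) - x) x
      = -2 * β * (1 + deriv (fun x => tanh (β * x) - x) x)
          * (3 - 2 * β + 3 * deriv (fun x => tanh (β * x) - x) x) := by
  rw [iteratedDeriv_three_tanh_mul_sub_id, deriv_tanh_mul_sub_id]
  ring

end TanhMulSub

namespace Function.Periodic

variable {v : ℝ → ℝ} {T : ℝ}

theorem integral_deriv_mul_self_eq_zero (hper : Periodic v T) (hv : Differentiable ℝ v)
    (hv' : Continuous (deriv v)) : ∫ t in 0..T, deriv v t * v t = 0 := by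
  have hparts := intervalIntegral.integral_deriv_mul_eq_sub (fun t _ => (hv t).hasDerivAt)
    (fun t _ => (hv t).hasDerivAt) (hv'.intervalIntegrable 0 T) (hv'.intervalIntegrable 0 T)
  simp_rw [mul_comm (v _) (deriv v _), ← two_mul] at hparts
  rw [intervalIntegral.integral_const_mul, hper.eq, sub_self] at hparts
  simpa using hparts

theorem integral_sq_pos (hper : Periodic v T) (hT : 0 < T) (hv : Continuous v)
    (hne : ∃ t, v t ≠ 0) : 0 < ∫ t in 0..T, v t ^ 2 := by
  obtain ⟨t, ht⟩ := hne
  obtain ⟨s, hs, hts⟩ := hper.exists_mem_Ico₀ hT t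
  refine intervalIntegral.integral_pos hT (hv.pow 2).continuousOn (fun _ _ => sq_nonneg _)
    ⟨s, Set.Ico_subset_Icc_self hs, ?_⟩
  rw [← hts]
  positivity

theorem integral_quadratic_deriv (hper : Periodic v T) (hv : Differentiable ℝ v)
    (hv' : Continuous (deriv v)) (a b c : ℝ) :
    ∫ t in 0..T, a * deriv v t ^ 2 + b * (deriv v t * v t) + c * v t ^ 2
      = a * (∫ t in 0..T, deriv v t ^ 2) + c * ∫ t in 0..T, v t ^ 2 := by
  have hint : ∀ g : ℝ → ℝ, Continuous g → IntervalIntegrable g MeasureTheory.volume 0 T :=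
    fun g hg => hg.intervalIntegrable 0 T
  have hvc := hv.continuous
  rw [intervalIntegral.integral_add (hint _ (by fun_prop)) (hint _ (by fun_prop)),
    intervalIntegral.integral_add (hint _ (by fun_prop)) (hint _ (by fun_prop)),
    intervalIntegral.integral_const_mul, intervalIntegral.integral_const_mul,
    intervalIntegral.integral_const_mul, hper.integral_deriv_mul_self_eq_zero hv hv']
  ring

end Function.Periodic

theorem third_deriv_integral_neg_general (β : ℝ) (hβ1 : 1 < β) (hβ2 : β < 4/3)
    (f : ℝ → ℝ) (hf : ∀ x, f x = Real.tanh (β * x) - x)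
    (x₀ : ℝ → ℝ) (hx₀ : Continuous x₀)
    (v : ℝ → ℝ) (hv : Differentiable ℝ v) (hvper : ∀ t, v (t + 1) = v t)
    (hvne : ¬ ∀ t, v t = 0)
    (hveq : ∀ t, deriv v t = deriv f (x₀ t) * v t) :
    (∫ s in (0:ℝ)..1, iteratedDeriv 3 f (x₀ s) * v s ^ 2) < 0 := by
  obtain rfl : f = fun x => tanh (β * x) - x := funext hf
  have hper : Periodic v 1 := hvper
  have hv' : Continuous (deriv v) := by
    rw [funext hveq]
    exact ((continuous_deriv_tanh_mul_sub_id β).comp hx₀).mul hv.continuous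
  have hintegrand : ∀ s, iteratedDeriv 3 (fun x => tanh (β * x) - x) (x₀ s) * v s ^ 2
      = -6 * β * deriv v s ^ 2 + -2 * β * (6 - 2 * β) * (deriv v s * v s)
        + -2 * β * (3 - 2 * β) * v s ^ 2 := fun s => by
    rw [iteratedDeriv_three_tanh_mul_sub_id_eq_deriv, hveq]
    ring
  rw [intervalIntegral.integral_congr fun s _ => hintegrand s,
    hper.integral_quadratic_deriv hv hv']
  have hderiv_sq : 0 ≤ ∫ s in (0:ℝ)..1, deriv v s ^ 2 :=
    intervalIntegral.integral_nonneg zero_le_one fun s _ => sq_nonneg _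
  have hv_sq := hper.integral_sq_pos one_pos hv.continuous (not_forall.mp hvne)
  nlinarith [mul_pos (by nlinarith : (0:ℝ) < 2 * β * (3 - 2 * β)) hv_sq]

theorem third_deriv_integral_neg (β : ℝ) (hβ1 : 1 < β) (hβ2 : β < 4/3)
    (f : ℝ → ℝ) (hf : ∀ x, f x = Real.tanh (β * x) - x)
    (x₀ : ℝ → ℝ) (hx₀ : Continuous x₀) (hx₀per : ∀ t, x₀ (t + 1) = x₀ t)
    (v : ℝ → ℝ) (hv : Differentiable ℝ v) (hvper : ∀ t, v (t + 1) = v t)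
    (hvne : ¬ ∀ t, v t = 0)
    (hveq : ∀ t, deriv v t = deriv f (x₀ t) * v t) :
    (∫ s in (0:ℝ)..1, iteratedDeriv 3 f (x₀ s) * v s ^ 2) < 0 :=
  third_deriv_integral_neg_general β hβ1 hβ2 f hf x₀ hx₀ v hv hvper hvne hveq
end

section
/- Let ε > 0, put z = exp(−1/(2ε)), and define h_cs = √((1 + 4π²ε²)·(π²ε² − 2π²ε²·z + (1 + π²ε²)·z²))/(πε·(1+z)). Assume h_cs ≥ 1. Then there exist t₀ ∈ ℝ and a differentiable function x : ℝ → ℝ satisfying ε·x'(t) = 1 − x(t) + h_cs·cos(2πt) for all t, such that h_cs·cos(2πt₀) = 1, h_cs·sin(2πt₀) = √(h_cs² − 1), x(t₀) = 0 and x(t₀ + 1/2) = 0; equivalently, h = h_cs solves the equation exp(−1/(2ε))·(2 + 4π²ε² + 2πε·√(h² − 1)) − 4π²ε² + 2πε·√(h² − 1) = 0. -/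
/-!
Write `a = πε`. The radicand defining `h_cs` factors as `(a(1+z))² + (2a² - z(1+2a²))²`, and
`z(1+2a²) ≤ 2a²` because `exp(1/(2ε))` dominates its quadratic Taylor polynomial; hence
`√(h_cs² - 1) = (2a² - z(1+2a²))/(a(1+z))`, which is the algebraic equation in disguise.
The equation `ε x' = 1 - x + h cos ωt` has the periodic solution
`p(t) = 1 + h (cos ωt + εω sin ωt)/(1 + ε²ω²)`, and every other solution differs from it by a
multiple of `exp(-t/ε)`. For `ω = 2π` half a period reflects `p`
about `1`, so the solution through `x(t₀) = 0` vanishes at `t₀ + 1/2` exactly when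
`(1 + z) p(t₀) = 2`, the same algebraic equation once `h cos 2πt₀ = 1`, `h sin 2πt₀ = √(h² - 1)`.
-/

open Real

noncomputable def periodicResponse (ε ω h t : ℝ) : ℝ :=
  1 + h * (cos (ω * t) + ε * ω * sin (ω * t)) / (1 + (ε * ω) ^ 2)

noncomputable def forcedSolution (ε ω h t₀ x₀ t : ℝ) : ℝ :=
  periodicResponse ε ω h t + (x₀ - periodicResponse ε ω h t₀) * exp (-(t - t₀) / ε)

section ForcedLinearODE

variable {ε ω h t₀ x₀ : ℝ}

theorem hasDerivAt_periodicResponse (hε : ε ≠ 0) (t : ℝ) :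
    HasDerivAt (periodicResponse ε ω h)
      ((1 - periodicResponse ε ω h t + h * cos (ω * t)) / ε) t := by
  have hlin : HasDerivAt (fun t ↦ ω * t) ω t := by
    simpa using (hasDerivAt_id t).const_mul ω
  have hcos := (hasDerivAt_cos (ω * t)).comp t hlin
  have hsin := (hasDerivAt_sin (ω * t)).comp t hlin
  refine ((((hcos.add (hsin.const_mul (ε * ω))).const_mul h).div_const _).const_add 1).congr_deriv
    ?_
  simp only [periodicResponse]
  field_simp
  ring

theorem hasDerivAt_forcedSolution (hε : ε ≠ 0) (t : ℝ) :
    HasDerivAt (forcedSolution ε ω h t₀ x₀)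
      ((1 - forcedSolution ε ω h t₀ x₀ t + h * cos (ω * t)) / ε) t := by
  have hexp : HasDerivAt (fun t ↦ exp (-(t - t₀) / ε)) (exp (-(t - t₀) / ε) * (-1 / ε)) t := by
    simpa using ((((hasDerivAt_id t).sub_const t₀).neg).div_const ε).exp
  refine ((hasDerivAt_periodicResponse hε t).add (hexp.const_mul _)).congr_deriv ?_
  simp only [forcedSolution]
  field_simp
  ring

theorem forcedSolution_ode (hε : ε ≠ 0) (t : ℝ) :
    ε * deriv (forcedSolution ε ω h t₀ x₀) t =
      1 - forcedSolution ε ω h t₀ x₀ t + h * cos (ω * t) := by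
  rw [(hasDerivAt_forcedSolution hε t).deriv]
  field_simp

theorem differentiable_forcedSolution (hε : ε ≠ 0) :
    Differentiable ℝ (forcedSolution ε ω h t₀ x₀) :=
  fun t ↦ (hasDerivAt_forcedSolution hε t).differentiableAt

@[simp]
theorem forcedSolution_self : forcedSolution ε ω h t₀ x₀ t₀ = x₀ := by
  simp [forcedSolution]

theorem periodicResponse_add_half (t : ℝ) :
    periodicResponse ε (2 * π) h (t + 1 / 2) = 2 - periodicResponse ε (2 * π) h t := by
  have hshift : 2 * π * (t + 1 / 2) = 2 * π * t + π := by ring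
  simp only [periodicResponse, hshift, cos_add_pi, sin_add_pi]
  ring

end ForcedLinearODE

theorem exp_neg_one_div_two_mul_mul_le {ε : ℝ} (hε : 0 < ε) :
    exp (-1 / (2 * ε)) * (1 + 2 * (π * ε) ^ 2) ≤ 2 * (π * ε) ^ 2 := by
  have hsq : (π * ε) ^ 2 * (1 / (2 * ε)) ^ 2 = π ^ 2 / 4 := by field_simp; ring
  set y := 1 / (2 * ε)
  have hy : 0 < y := by positivity
  have hbound : 1 + 2 * (π * ε) ^ 2 ≤ 2 * (π * ε) ^ 2 * exp y := calc
    1 + 2 * (π * ε) ^ 2 ≤ 2 * (π * ε) ^ 2 * (1 + y + y ^ 2 / 2) := by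
      nlinarith [pi_gt_three, mul_pos (pow_pos (mul_pos pi_pos hε) 2) hy]
    _ ≤ 2 * (π * ε) ^ 2 * exp y := by gcongr; exact quadratic_le_exp_of_nonneg hy.le
  have hneg : -1 / (2 * ε) = -y := by ring
  calc exp (-1 / (2 * ε)) * (1 + 2 * (π * ε) ^ 2)
      ≤ exp (-y) * (2 * (π * ε) ^ 2 * exp y) := by rw [hneg]; gcongr
    _ = 2 * (π * ε) ^ 2 := by rw [mul_left_comm, ← exp_add, neg_add_cancel, exp_zero, mul_one]

theorem sqrt_sq_sub_one_eq_of_eq_sqrt_div {a z h : ℝ} (hd : 0 < a * (1 + z))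
    (hz : z * (1 + 2 * a ^ 2) ≤ 2 * a ^ 2)
    (hh : h = √((1 + 4 * a ^ 2) * (a ^ 2 - 2 * a ^ 2 * z + (1 + a ^ 2) * z ^ 2)) / (a * (1 + z))) :
    √(h ^ 2 - 1) = (2 * a ^ 2 - z * (1 + 2 * a ^ 2)) / (a * (1 + z)) := by
  have hsum : (1 + 4 * a ^ 2) * (a ^ 2 - 2 * a ^ 2 * z + (1 + a ^ 2) * z ^ 2) =
      (a * (1 + z)) ^ 2 + (2 * a ^ 2 - z * (1 + 2 * a ^ 2)) ^ 2 := by ring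
  have hsq : h ^ 2 - 1 = ((2 * a ^ 2 - z * (1 + 2 * a ^ 2)) / (a * (1 + z))) ^ 2 := by
    have ha : a ≠ 0 := left_ne_zero_of_mul hd.ne'
    have hz1 : 1 + z ≠ 0 := right_ne_zero_of_mul hd.ne'
    rw [hh, div_pow, sq_sqrt (hsum ▸ by positivity), hsum]
    field_simp
    ring
  rw [hsq, sqrt_sq (div_nonneg (by linarith) hd.le)]

theorem exists_mul_cos_eq_one_mul_sin_eq_sqrt {h : ℝ} (hh : 1 ≤ h) :
    ∃ θ, h * cos θ = 1 ∧ h * sin θ = √(h ^ 2 - 1) := by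
  have hpos : 0 < h := one_pos.trans_le hh
  have hinv_le : 1 / h ≤ 1 := (div_le_one hpos).2 hh
  refine ⟨arccos (1 / h), ?_, ?_⟩
  · rw [cos_arccos (by linarith [one_div_pos.2 hpos]) hinv_le]
    field_simp
  · have hfactor : h ^ 2 * (1 - (1 / h) ^ 2) = h ^ 2 - 1 := by field_simp
    rw [sin_arccos, ← hfactor, sqrt_mul (sq_nonneg h), sqrt_sq hpos.le]

theorem hcs_connecting_solution (ε : ℝ) (hε : 0 < ε)
    (z : ℝ) (hz : z = Real.exp (-1 / (2 * ε)))
    (hcs : ℝ)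
    (hhcs : hcs = Real.sqrt ((1 + 4 * Real.pi ^ 2 * ε ^ 2) *
        (Real.pi ^ 2 * ε ^ 2 - 2 * Real.pi ^ 2 * ε ^ 2 * z +
          (1 + Real.pi ^ 2 * ε ^ 2) * z ^ 2)) / (Real.pi * ε * (1 + z)))
    (hcs_ge : 1 ≤ hcs) :
    (∃ (t₀ : ℝ) (x : ℝ → ℝ), Differentiable ℝ x ∧
      (∀ t, ε * deriv x t = 1 - x t + hcs * Real.cos (2 * Real.pi * t)) ∧
      hcs * Real.cos (2 * Real.pi * t₀) = 1 ∧
      hcs * Real.sin (2 * Real.pi * t₀) = Real.sqrt (hcs ^ 2 - 1) ∧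
      x t₀ = 0 ∧ x (t₀ + 1/2) = 0) ∧
    Real.exp (-1 / (2 * ε)) * (2 + 4 * Real.pi ^ 2 * ε ^ 2 +
        2 * Real.pi * ε * Real.sqrt (hcs ^ 2 - 1)) -
      4 * Real.pi ^ 2 * ε ^ 2 + 2 * Real.pi * ε * Real.sqrt (hcs ^ 2 - 1) = 0 := by
  rw [← hz]
  have hzpos : 0 < z := hz ▸ exp_pos _
  have hd : 0 < π * ε * (1 + z) := by positivity
  have hS := sqrt_sq_sub_one_eq_of_eq_sqrt_div (h := hcs) hd
    (hz ▸ exp_neg_one_div_two_mul_mul_le hε) (by rw [hhcs]; ring_nf)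
  have hequation : z * (2 + 4 * π ^ 2 * ε ^ 2 + 2 * π * ε * √(hcs ^ 2 - 1)) -
      4 * π ^ 2 * ε ^ 2 + 2 * π * ε * √(hcs ^ 2 - 1) = 0 := by
    rw [hS]
    field_simp
    ring
  obtain ⟨θ, hcos, hsin⟩ := exists_mul_cos_eq_one_mul_sin_eq_sqrt hcs_ge
  have hθ : 2 * π * (θ / (2 * π)) = θ := by field_simp
  refine ⟨⟨θ / (2 * π), forcedSolution ε (2 * π) hcs (θ / (2 * π)) 0,
    differentiable_forcedSolution hε.ne', forcedSolution_ode hε.ne', by rwa [hθ], by rwa [hθ],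
    forcedSolution_self, ?_⟩, hequation⟩
  have hdecay : -(θ / (2 * π) + 1 / 2 - θ / (2 * π)) / ε = -1 / (2 * ε) := by ring
  rw [forcedSolution, periodicResponse_add_half, hdecay, ← hz, periodicResponse, hθ]
  field_simp
  linear_combination (-(1 + z)) * hcos - (1 + z) * (2 * π * ε) * hsin - hequation
end
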